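/- Lemma 2.1 (sign of the spherical edge weight and the local Delaunay condition). Let p_i, p_j, p_k, p_l be unit vectors in ℝ³ with det(p_i,p_j,p_k) > 0 and det(p_i,p_j,p_l) < 0, and let c_ij be the spherical edge weight of this configuration. Let n ∈ ℝ³ be the unique vector with ⟨n,p_i⟩ = ⟨n,p_j⟩ = ⟨n,p_k⟩ = 1 (it exists and is unique since p_i, p_j, p_k are linearly independent; the open spherical disc bounded by the circumcircle of the spherical triangle p_ip_jp_k is {x on the unit sphere : ⟨n,x⟩ > 1}). Then: (a) c_ij ≥ 0 if and only if ⟨n, p_l⟩ ≤ 1, i.e. if and only if p_l lies on or outside the circumcircle of p_ip_jp_k (the local Delaunay condition); and (b) c_ij = 0 if and only if ⟨n, p_l⟩ = 1, i.e. if and only if p_l lies on that circumcircle. -/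
import Mathlib


noncomputable section

set_option maxHeartbeats 2000000

/-- Standard inner product on `ℝ³`. -/
def dot3 (x y : Fin 3 → ℝ) : ℝ := x 0 * y 0 + x 1 * y 1 + x 2 * y 2

/-- Euclidean norm on `ℝ³`. -/
def norm3 (x : Fin 3 → ℝ) : ℝ := Real.sqrt (dot3 x x)

/-- Cross product on `ℝ³`. -/
def cross3 (x y : Fin 3 → ℝ) : Fin 3 → ℝ :=
  ![x 1 * y 2 - x 2 * y 1, x 2 * y 0 - x 0 * y 2, x 0 * y 1 - x 1 * y 0]

/-- Determinant of three vectors in `ℝ³`. -/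
def det3 (x y z : Fin 3 → ℝ) : ℝ := dot3 (cross3 x y) z

/-- Spherical angle at `a` between `b` and `c` (all unit vectors). -/
def sphAngle (a b c : Fin 3 → ℝ) : ℝ :=
  Real.arccos (dot3 (b - dot3 a b • a) (c - dot3 a c • a) /
    (norm3 (b - dot3 a b • a) * norm3 (c - dot3 a c • a)))

/-- Spherical edge weight of two adjacent spherical triangles `p_i p_j p_k` (positively
oriented) and `p_i p_j p_l` (negatively oriented) sharing the edge `ij`. -/
def sphEdgeWeight (pi pj pk pl : Fin 3 → ℝ) : ℝ :=
  (Real.tan ((sphAngle pi pj pk + sphAngle pj pk pi - sphAngle pk pi pj) / 2)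
   + Real.tan ((sphAngle pi pl pj + sphAngle pj pi pl - sphAngle pl pj pi) / 2))
  / (2 * Real.cos (Real.arccos (dot3 pi pj) / 2) ^ 2)

/-! ### Auxiliary lemmas -/

lemma dot3_comm (x y : Fin 3 → ℝ) : dot3 x y = dot3 y x := by
  simp only [dot3]; ring

lemma det3_expand (x y z : Fin 3 → ℝ) :
    det3 x y z = (x 1 * y 2 - x 2 * y 1) * z 0 + (x 2 * y 0 - x 0 * y 2) * z 1 +
      (x 0 * y 1 - x 1 * y 0) * z 2 := rfl

lemma det3_cyc (x y z : Fin 3 → ℝ) : det3 y z x = det3 x y z := by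
  simp only [det3_expand]; ring

lemma det3_swap (x y z : Fin 3 → ℝ) : det3 y x z = -det3 x y z := by
  simp only [det3_expand]; ring

/-- Gram determinant identity. -/
lemma gram3 (u v w : Fin 3 → ℝ) (hu : dot3 u u = 1) (hv : dot3 v v = 1) (hw : dot3 w w = 1) :
    det3 u v w ^ 2 =
      1 - dot3 v w ^ 2 - dot3 u w ^ 2 - dot3 u v ^ 2 +
        2 * dot3 v w * dot3 u w * dot3 u v := by
  simp only [det3_expand, dot3] at *
  linear_combination ((v 0 * v 0 + v 1 * v 1 + v 2 * v 2) * (w 0 * w 0 + w 1 * w 1 + w 2 * w 2)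
      - (v 0 * w 0 + v 1 * w 1 + v 2 * w 2) ^ 2) * hu +
    ((w 0 * w 0 + w 1 * w 1 + w 2 * w 2) - (u 0 * w 0 + u 1 * w 1 + u 2 * w 2) ^ 2) * hv +
    (1 - (u 0 * v 0 + u 1 * v 1 + u 2 * v 2) ^ 2) * hw

/-- Cauchy–Schwarz for unit vectors, via the Lagrange identity. -/
lemma sq_dot3_le_one (u v : Fin 3 → ℝ) (hu : dot3 u u = 1) (hv : dot3 v v = 1) :
    dot3 u v ^ 2 ≤ 1 := by
  simp only [dot3] at hu hv ⊢
  have key : (u 0 * v 0 + u 1 * v 1 + u 2 * v 2) ^ 2 +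
      ((u 1 * v 2 - u 2 * v 1) ^ 2 + (u 2 * v 0 - u 0 * v 2) ^ 2
        + (u 0 * v 1 - u 1 * v 0) ^ 2) = 1 := by
    linear_combination (v 0 * v 0 + v 1 * v 1 + v 2 * v 2) * hu + hv
  nlinarith [sq_nonneg (u 1 * v 2 - u 2 * v 1), sq_nonneg (u 2 * v 0 - u 0 * v 2),
    sq_nonneg (u 0 * v 1 - u 1 * v 0)]

lemma dot3_proj (u x y : Fin 3 → ℝ) (hu : dot3 u u = 1) :
    dot3 (x - dot3 u x • u) (y - dot3 u y • u) = dot3 x y - dot3 u x * dot3 u y := by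
  simp only [dot3, Pi.sub_apply, Pi.smul_apply, smul_eq_mul] at *
  linear_combination ((u 0 * x 0 + u 1 * x 1 + u 2 * x 2) *
    (u 0 * y 0 + u 1 * y 1 + u 2 * y 2)) * hu

/-- Cosine and sine of a spherical angle of a positively–oriented spherical triangle. -/
lemma sphAngle_cos_sin (u v w : Fin 3 → ℝ) (hu : dot3 u u = 1) (hv : dot3 v v = 1)
    (hw : dot3 w w = 1) (hdet : 0 < det3 u v w)
    (hc2 : dot3 u v ^ 2 < 1) (hb2 : dot3 u w ^ 2 < 1) :
    Real.cos (sphAngle u v w) =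
      (dot3 v w - dot3 u v * dot3 u w) /
        (Real.sqrt (1 - dot3 u v ^ 2) * Real.sqrt (1 - dot3 u w ^ 2)) ∧
    Real.sin (sphAngle u v w) =
      det3 u v w / (Real.sqrt (1 - dot3 u v ^ 2) * Real.sqrt (1 - dot3 u w ^ 2)) := by
  have hgram := gram3 u v w hu hv hw
  have hTc2 : Real.sqrt (1 - dot3 u v ^ 2) ^ 2 = 1 - dot3 u v ^ 2 :=
    Real.sq_sqrt (by linarith)
  have hTb2 : Real.sqrt (1 - dot3 u w ^ 2) ^ 2 = 1 - dot3 u w ^ 2 :=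
    Real.sq_sqrt (by linarith)
  have hTc0 : 0 < Real.sqrt (1 - dot3 u v ^ 2) := Real.sqrt_pos.2 (by linarith)
  have hTb0 : 0 < Real.sqrt (1 - dot3 u w ^ 2) := Real.sqrt_pos.2 (by linarith)
  have h01 : 0 < Real.sqrt (1 - dot3 u v ^ 2) * Real.sqrt (1 - dot3 u w ^ 2) :=
    mul_pos hTc0 hTb0
  have hTT : (Real.sqrt (1 - dot3 u v ^ 2) * Real.sqrt (1 - dot3 u w ^ 2)) ^ 2
      = (1 - dot3 u v ^ 2) * (1 - dot3 u w ^ 2) := by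
    rw [mul_pow, hTc2, hTb2]
  have hdd : det3 u v w ^ 2 =
      (Real.sqrt (1 - dot3 u v ^ 2) * Real.sqrt (1 - dot3 u w ^ 2)) ^ 2
        - (dot3 v w - dot3 u v * dot3 u w) ^ 2 := by
    rw [hTT]; linear_combination hgram
  have hsq : (dot3 v w - dot3 u v * dot3 u w) ^ 2
      ≤ (Real.sqrt (1 - dot3 u v ^ 2) * Real.sqrt (1 - dot3 u w ^ 2)) ^ 2 := by
    nlinarith [pow_pos hdet 2]
  have h1 : dot3 (v - dot3 u v • u) (w - dot3 u w • u)
      = dot3 v w - dot3 u v * dot3 u w := dot3_proj u v w hu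
  have h2 : norm3 (v - dot3 u v • u) = Real.sqrt (1 - dot3 u v ^ 2) := by
    rw [norm3]; congr 1; rw [dot3_proj u v v hu]; linear_combination hv
  have h3 : norm3 (w - dot3 u w • u) = Real.sqrt (1 - dot3 u w ^ 2) := by
    rw [norm3]; congr 1; rw [dot3_proj u w w hu]; linear_combination hw
  have hS : sphAngle u v w = Real.arccos ((dot3 v w - dot3 u v * dot3 u w) /
      (Real.sqrt (1 - dot3 u v ^ 2) * Real.sqrt (1 - dot3 u w ^ 2))) := by
    rw [sphAngle, h1, h2, h3]
  have harg1 : -1 ≤ (dot3 v w - dot3 u v * dot3 u w) /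
      (Real.sqrt (1 - dot3 u v ^ 2) * Real.sqrt (1 - dot3 u w ^ 2)) := by
    rw [le_div_iff₀ h01]
    nlinarith [sq_nonneg (dot3 v w - dot3 u v * dot3 u w +
      Real.sqrt (1 - dot3 u v ^ 2) * Real.sqrt (1 - dot3 u w ^ 2))]
  have harg2 : (dot3 v w - dot3 u v * dot3 u w) /
      (Real.sqrt (1 - dot3 u v ^ 2) * Real.sqrt (1 - dot3 u w ^ 2)) ≤ 1 := by
    rw [div_le_one h01]
    nlinarith [sq_nonneg (dot3 v w - dot3 u v * dot3 u w -
      Real.sqrt (1 - dot3 u v ^ 2) * Real.sqrt (1 - dot3 u w ^ 2))]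
  constructor
  · rw [hS, Real.cos_arccos harg1 harg2]
  · rw [hS, Real.sin_arccos]
    have h9 : 1 - ((dot3 v w - dot3 u v * dot3 u w) /
        (Real.sqrt (1 - dot3 u v ^ 2) * Real.sqrt (1 - dot3 u w ^ 2))) ^ 2
        = (det3 u v w / (Real.sqrt (1 - dot3 u v ^ 2) * Real.sqrt (1 - dot3 u w ^ 2))) ^ 2 := by
      rw [div_pow, div_pow, hdd]
      field_simp
    rw [h9, Real.sqrt_sq (by positivity)]

/-- The half-angle tangent formula, purely in terms of real parameters. -/
lemma tan_half_formula (a b c d A B C x y z : ℝ) (hd : 0 < d)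
    (hd2 : d ^ 2 = 1 - a ^ 2 - b ^ 2 - c ^ 2 + 2 * a * b * c)
    (hx2 : x ^ 2 = 1 - a ^ 2) (hy2 : y ^ 2 = 1 - b ^ 2) (hz2 : z ^ 2 = 1 - c ^ 2)
    (hx0 : 0 < x) (hy0 : 0 < y) (hz0 : 0 < z)
    (ha1 : -1 < a) (hb1 : -1 < b) (hc1 : c < 1)
    (hcA : Real.cos A = (a - b * c) / (z * y)) (hsA : Real.sin A = d / (z * y))
    (hcB : Real.cos B = (b - a * c) / (x * z)) (hsB : Real.sin B = d / (x * z))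
    (hcC : Real.cos C = (c - a * b) / (y * x)) (hsC : Real.sin C = d / (y * x)) :
    Real.tan ((A + B - C) / 2) = (1 + c - a - b) / d := by
  have hsin : Real.sin (A + B - C) =
      (d * ((b - a * c) * (c - a * b) + (a - b * c) * (c - a * b)
        - (a - b * c) * (b - a * c) + d ^ 2)) / (x * y * z) ^ 2 := by
    rw [Real.sin_sub, Real.sin_add, Real.cos_add, hcA, hsA, hcB, hsB, hcC, hsC]
    field_simp
    ring
  have hcos : 1 + Real.cos (A + B - C) =
      ((x * y * z) ^ 2 + ((a - b * c) * (b - a * c) * (c - a * b)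
        + d ^ 2 * ((a - b * c) + (b - a * c) - (c - a * b)))) / (x * y * z) ^ 2 := by
    rw [Real.cos_sub, Real.cos_add, Real.sin_add, hcA, hsA, hcB, hsB, hcC, hsC]
    field_simp
    ring
  have hQ : (x * y * z) ^ 2 = (1 - a ^ 2) * (1 - b ^ 2) * (1 - c ^ 2) := by
    rw [mul_pow, mul_pow, hx2, hy2, hz2]
  have hnum : (x * y * z) ^ 2 + ((a - b * c) * (b - a * c) * (c - a * b)
      + d ^ 2 * ((a - b * c) + (b - a * c) - (c - a * b)))
      = d ^ 2 * (1 + a) * (1 + b) * (1 - c) := by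
    linear_combination hQ + ((a - b * c) + (b - a * c) - (c - a * b)
      - (1 + a) * (1 + b) * (1 - c)) * hd2
  have hM : (b - a * c) * (c - a * b) + (a - b * c) * (c - a * b)
      - (a - b * c) * (b - a * c) + d ^ 2
      = (1 + c - a - b) * ((1 + a) * ((1 + b) * (1 - c))) := by
    linear_combination hd2
  have h1a : (0:ℝ) < 1 + a := by linarith
  have h1b : (0:ℝ) < 1 + b := by linarith
  have h1c : (0:ℝ) < 1 - c := by linarith
  have hpos : 0 < 1 + Real.cos (A + B - C) := by
    rw [hcos, hnum]
    apply div_pos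
    · exact mul_pos (mul_pos (mul_pos (pow_pos hd 2) h1a) h1b) h1c
    · positivity
  have hθ : A + B - C = 2 * ((A + B - C) / 2) := by ring
  have h2c : Real.cos (A + B - C) = 2 * Real.cos ((A + B - C) / 2) ^ 2 - 1 := by
    nth_rewrite 1 [hθ]; exact Real.cos_two_mul _
  have h2s : Real.sin (A + B - C)
      = 2 * Real.sin ((A + B - C) / 2) * Real.cos ((A + B - C) / 2) := by
    nth_rewrite 1 [hθ]; exact Real.sin_two_mul _
  have hcφ : Real.cos ((A + B - C) / 2) ≠ 0 := by
    intro h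
    rw [h2c, h] at hpos
    norm_num at hpos
  have htan : Real.tan ((A + B - C) / 2)
      = Real.sin (A + B - C) / (1 + Real.cos (A + B - C)) := by
    rw [Real.tan_eq_sin_div_cos, h2s, h2c]
    field_simp
    ring
  rw [htan, hsin, hcos, hnum, hM]
  have hxyz : ((x * y * z) ^ 2 : ℝ) ≠ 0 := by positivity
  rw [div_div_div_comm, div_self hxyz, div_one]
  rw [div_eq_div_iff
    (mul_pos (mul_pos (mul_pos (pow_pos hd 2) h1a) h1b) h1c).ne' hd.ne']
  ring

/-- Full tangent formula for a positively–oriented spherical triangle. -/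
lemma tan_formula (u v w : Fin 3 → ℝ) (hu : dot3 u u = 1) (hv : dot3 v v = 1)
    (hw : dot3 w w = 1) (hdet : 0 < det3 u v w) :
    Real.tan ((sphAngle u v w + sphAngle v w u - sphAngle w u v) / 2) =
      (1 + dot3 u v - dot3 v w - dot3 u w) / det3 u v w := by
  have hgram := gram3 u v w hu hv hw
  have hd2pos : 0 < det3 u v w ^ 2 := pow_pos hdet 2
  have hcsa : dot3 v w ^ 2 ≤ 1 := sq_dot3_le_one v w hv hw
  have hcsb : dot3 u w ^ 2 ≤ 1 := sq_dot3_le_one u w hu hw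
  have hcsc : dot3 u v ^ 2 ≤ 1 := sq_dot3_le_one u v hu hv
  have ha2 : dot3 v w ^ 2 < 1 := by
    nlinarith [sq_nonneg (dot3 u v - dot3 v w * dot3 u w),
      mul_nonneg (sub_nonneg.2 hcsa) (sq_nonneg (dot3 u w))]
  have hb2 : dot3 u w ^ 2 < 1 := by
    nlinarith [sq_nonneg (dot3 u v - dot3 v w * dot3 u w),
      mul_nonneg (sub_nonneg.2 hcsb) (sq_nonneg (dot3 v w))]
  have hc2 : dot3 u v ^ 2 < 1 := by
    nlinarith [sq_nonneg (dot3 u w - dot3 v w * dot3 u v),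
      mul_nonneg (sub_nonneg.2 hcsc) (sq_nonneg (dot3 v w))]
  have hdetB : 0 < det3 v w u := by rw [det3_cyc]; exact hdet
  have hdetC : 0 < det3 w u v := by rw [det3_cyc, det3_cyc]; exact hdet
  obtain ⟨hcA, hsA⟩ := sphAngle_cos_sin u v w hu hv hw hdet hc2 hb2
  obtain ⟨hcB, hsB⟩ := sphAngle_cos_sin v w u hv hw hu hdetB ha2
    (by rw [dot3_comm v u]; exact hc2)
  obtain ⟨hcC, hsC⟩ := sphAngle_cos_sin w u v hw hu hv hdetC
    (by rw [dot3_comm w u]; exact hb2) (by rw [dot3_comm w v]; exact ha2)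
  rw [dot3_comm w u, dot3_comm v u] at hcB
  rw [dot3_comm v u] at hsB
  rw [det3_cyc] at hsB
  rw [dot3_comm w u, dot3_comm w v] at hcC hsC
  rw [det3_cyc, det3_cyc] at hsC
  refine tan_half_formula (dot3 v w) (dot3 u w) (dot3 u v) (det3 u v w)
    (sphAngle u v w) (sphAngle v w u) (sphAngle w u v)
    (Real.sqrt (1 - dot3 v w ^ 2)) (Real.sqrt (1 - dot3 u w ^ 2))
    (Real.sqrt (1 - dot3 u v ^ 2))
    hdet hgram
    (Real.sq_sqrt (by linarith)) (Real.sq_sqrt (by linarith)) (Real.sq_sqrt (by linarith))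
    (Real.sqrt_pos.2 (by linarith)) (Real.sqrt_pos.2 (by linarith))
    (Real.sqrt_pos.2 (by linarith))
    (by nlinarith) (by nlinarith) (by nlinarith)
    ?_ ?_ ?_ ?_ ?_ ?_
  · rw [hcA]; try ring
  · rw [hsA]; try ring
  · rw [hcB]; try ring
  · rw [hsB]; try ring
  · rw [hcC]; try ring
  · rw [hsC]; try ring

/-- Lemma 2.1: the spherical edge weight is nonnegative iff the local Delaunay condition
holds (`p_l` on or outside the circumcircle of `p_i p_j p_k`), and vanishes iff `p_l`
lies on that circumcircle. -/
theorem sph_edge_weight_sign_delaunay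
    (pi pj pk pl : Fin 3 → ℝ)
    (hpi : norm3 pi = 1) (hpj : norm3 pj = 1) (hpk : norm3 pk = 1) (hpl : norm3 pl = 1)
    (hdetk : 0 < det3 pi pj pk) (hdetl : det3 pi pj pl < 0)
    (n : Fin 3 → ℝ)
    (hni : dot3 n pi = 1) (hnj : dot3 n pj = 1) (hnk : dot3 n pk = 1) :
    (0 ≤ sphEdgeWeight pi pj pk pl ↔ dot3 n pl ≤ 1) ∧
    (sphEdgeWeight pi pj pk pl = 0 ↔ dot3 n pl = 1) := by
  simp only [norm3] at hpi hpj hpk hpl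
  have h1 : dot3 pi pi = 1 := Real.sqrt_eq_one.mp hpi
  have h2 : dot3 pj pj = 1 := Real.sqrt_eq_one.mp hpj
  have h3 : dot3 pk pk = 1 := Real.sqrt_eq_one.mp hpk
  have h4 : dot3 pl pl = 1 := Real.sqrt_eq_one.mp hpl
  have hepos : 0 < -det3 pi pj pl := by linarith
  have hgram := gram3 pi pj pk h1 h2 h3
  have hcsc : dot3 pi pj ^ 2 ≤ 1 := sq_dot3_le_one pi pj h1 h2
  have hc2 : dot3 pi pj ^ 2 < 1 := by
    nlinarith [pow_pos hdetk 2, sq_nonneg (dot3 pi pk - dot3 pj pk * dot3 pi pj),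
      mul_nonneg (sub_nonneg.2 hcsc) (sq_nonneg (dot3 pj pk))]
  have hc1p : 0 < 1 + dot3 pi pj := by nlinarith
  have hc1m : 0 < 1 - dot3 pi pj := by nlinarith
  have ht1 : Real.tan ((sphAngle pi pj pk + sphAngle pj pk pi - sphAngle pk pi pj) / 2)
      = (1 + dot3 pi pj - dot3 pj pk - dot3 pi pk) / det3 pi pj pk :=
    tan_formula pi pj pk h1 h2 h3 hdetk
  have hdetl' : 0 < det3 pj pi pl := by rw [det3_swap]; linarith
  have ht2' := tan_formula pj pi pl h2 h1 h4 hdetl'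
  rw [dot3_comm pj pi, det3_swap pi pj pl] at ht2'
  have ht2 : Real.tan ((sphAngle pi pl pj + sphAngle pj pi pl - sphAngle pl pj pi) / 2)
      = (1 + dot3 pi pj - dot3 pi pl - dot3 pj pl) / (-det3 pi pj pl) := by
    rw [show sphAngle pi pl pj + sphAngle pj pi pl
      = sphAngle pj pi pl + sphAngle pi pl pj from add_comm _ _]
    exact ht2'
  have hden : 2 * Real.cos (Real.arccos (dot3 pi pj) / 2) ^ 2 = 1 + dot3 pi pj := by
    have h5 : Real.cos (Real.arccos (dot3 pi pj) / 2) ^ 2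
        = 1 / 2 + Real.cos (2 * (Real.arccos (dot3 pi pj) / 2)) / 2 := Real.cos_sq _
    rw [h5, show 2 * (Real.arccos (dot3 pi pj) / 2) = Real.arccos (dot3 pi pj) by ring,
      Real.cos_arccos (by nlinarith) (by nlinarith)]
    ring
  have hkey : (1 + dot3 pi pj - dot3 pj pk - dot3 pi pk) * (1 - dot3 pi pj)
        * (-det3 pi pj pl)
      + (1 + dot3 pi pj - dot3 pi pl - dot3 pj pl) * (1 - dot3 pi pj) * det3 pi pj pk
      = (1 - dot3 n pl) * (1 - dot3 pi pj ^ 2) * det3 pi pj pk := by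
    simp only [dot3, det3_expand] at h1 h2 hni hnj hnk ⊢
    linear_combination (-pj 2 * pk 1 * pl 0 + pj 2 * pk 0 * pl 1 + pj 1 * pk 2 * pl 0 - pj 1 * pk 0 * pl 2 - pj 0 * pk 2 * pl 1 + pj 0 * pk 1 * pl 2 + pi 2 ^ 2 * pj 2 ^ 3 * pk 1 * pl 0 - pi 2 ^ 2 * pj 2 ^ 3 * pk 0 * pl 1 - pi 2 ^ 2 * pj 1 * pj 2 ^ 2 * pk 2 * pl 0 + pi 2 ^ 2 * pj 1 * pj 2 ^ 2 * pk 0 * pl 2 + pi 2 ^ 2 * pj 0 * pj 2 ^ 2 * pk 2 * pl 1 - pi 2 ^ 2 * pj 0 * pj 2 ^ 2 * pk 1 * pl 2 + 2 * pi 1 * pi 2 * pj 1 * pj 2 ^ 2 * pk 1 * pl 0 - 2 * pi 1 * pi 2 * pj 1 * pj 2 ^ 2 * pk 0 * pl 1 - 2 * pi 1 * pi 2 * pj 1 ^ 2 * pj 2 * pk 2 * pl 0 + 2 * pi 1 * pi 2 * pj 1 ^ 2 * pj 2 * pk 0 * pl 2 + 2 * pi 1 * pi 2 * pj 0 * pj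 1 * pj 2 * pk 2 * pl 1 - 2 * pi 1 * pi 2 * pj 0 * pj 1 * pj 2 * pk 1 * pl 2 + pi 1 ^ 2 * pj 1 ^ 2 * pj 2 * pk 1 * pl 0 - pi 1 ^ 2 * pj 1 ^ 2 * pj 2 * pk 0 * pl 1 - pi 1 ^ 2 * pj 1 ^ 3 * pk 2 * pl 0 + pi 1 ^ 2 * pj 1 ^ 3 * pk 0 * pl 2 + pi 1 ^ 2 * pj 0 * pj 1 ^ 2 * pk 2 * pl 1 - pi 1 ^ 2 * pj 0 * pj 1 ^ 2 * pk 1 * pl 2 + 2 * pi 0 * pi 2 * pj 0 * pj 2 ^ 2 * pk 1 * pl 0 - 2 * pi 0 * pi 2 * pj 0 * pj 2 ^ 2 * pk 0 * pl 1 - 2 * pi 0 * pi 2 * pj 0 * pj 1 * pj 2 * pk 2 * pl 0 + 2 * pi 0 * pi 2 * pj 0 * pj 1 * pj 2 * pk 0 * pl 2 + 2 * pi 0 * pi 2 * pj 0 ^ 2 * pj 2 * pk 2 * pl 1 - 2 * pi 0 * pi 2 * pj 0 ^ 2 * pj 2 * pk 1 * pl 2 + 2 * pi 0 * pi 1 *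 pj 0 * pj 1 * pj 2 * pk 1 * pl 0 - 2 * pi 0 * pi 1 * pj 0 * pj 1 * pj 2 * pk 0 * pl 1 - 2 * pi 0 * pi 1 * pj 0 * pj 1 ^ 2 * pk 2 * pl 0 + 2 * pi 0 * pi 1 * pj 0 * pj 1 ^ 2 * pk 0 * pl 2 + 2 * pi 0 * pi 1 * pj 0 ^ 2 * pj 1 * pk 2 * pl 1 - 2 * pi 0 * pi 1 * pj 0 ^ 2 * pj 1 * pk 1 * pl 2 + pi 0 ^ 2 * pj 0 ^ 2 * pj 2 * pk 1 * pl 0 - pi 0 ^ 2 * pj 0 ^ 2 * pj 2 * pk 0 * pl 1 - pi 0 ^ 2 * pj 0 ^ 2 * pj 1 * pk 2 * pl 0 + pi 0 ^ 2 * pj 0 ^ 2 * pj 1 * pk 0 * pl 2 + pi 0 ^ 2 * pj 0 ^ 3 * pk 2 * pl 1 - pi 0 ^ 2 * pj 0 ^ 3 * pk 1 * pl 2) * hni +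
      (pi 2 * pk 1 * pl 0 - pi 2 * pk 0 * pl 1 - pi 2 ^ 3 * pj 2 ^ 2 * pk 1 * pl 0 + pi 2 ^ 3 * pj 2 ^ 2 * pk 0 * pl 1 - pi 1 * pk 2 * pl 0 + pi 1 * pk 0 * pl 2 + pi 1 * pi 2 ^ 2 * pj 2 ^ 2 * pk 2 * pl 0 - pi 1 * pi 2 ^ 2 * pj 2 ^ 2 * pk 0 * pl 2 - 2 * pi 1 * pi 2 ^ 2 * pj 1 * pj 2 * pk 1 * pl 0 + 2 * pi 1 * pi 2 ^ 2 * pj 1 * pj 2 * pk 0 * pl 1 + 2 * pi 1 ^ 2 * pi 2 * pj 1 * pj 2 * pk 2 * pl 0 - 2 * pi 1 ^ 2 * pi 2 * pj 1 * pj 2 * pk 0 * pl 2 - pi 1 ^ 2 * pi 2 * pj 1 ^ 2 * pk 1 * pl 0 + pi 1 ^ 2 * pi 2 * pj 1 ^ 2 * pk 0 * pl 1 + pi 1 ^ 3 * pj 1 ^ 2 * pk 2 * pl 0 - pi 1 ^ 3 * pj 1 ^ 2 * pk 0 * pl 2 + pi 0 * pk 2 * pl 1 - pi 0 * pk 1 *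 pl 2 - pi 0 * pi 2 ^ 2 * pj 2 ^ 2 * pk 2 * pl 1 + pi 0 * pi 2 ^ 2 * pj 2 ^ 2 * pk 1 * pl 2 - 2 * pi 0 * pi 2 ^ 2 * pj 0 * pj 2 * pk 1 * pl 0 + 2 * pi 0 * pi 2 ^ 2 * pj 0 * pj 2 * pk 0 * pl 1 - 2 * pi 0 * pi 1 * pi 2 * pj 1 * pj 2 * pk 2 * pl 1 + 2 * pi 0 * pi 1 * pi 2 * pj 1 * pj 2 * pk 1 * pl 2 + 2 * pi 0 * pi 1 * pi 2 * pj 0 * pj 2 * pk 2 * pl 0 - 2 * pi 0 * pi 1 * pi 2 * pj 0 * pj 2 * pk 0 * pl 2 - 2 * pi 0 * pi 1 * pi 2 * pj 0 * pj 1 * pk 1 * pl 0 + 2 * pi 0 * pi 1 * pi 2 * pj 0 * pj 1 * pk 0 * pl 1 - pi 0 * pi 1 ^ 2 * pj 1 ^ 2 * pk 2 * pl 1 + pi 0 * pi 1 ^ 2 * pj 1 ^ 2 * pk 1 * pl 2 + 2 * pi 0 * pi 1 ^ 2 * pj 0 * pj 1 * pk 2 * pl 0 - 2 * pi 0 * pi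 1 ^ 2 * pj 0 * pj 1 * pk 0 * pl 2 - 2 * pi 0 ^ 2 * pi 2 * pj 0 * pj 2 * pk 2 * pl 1 + 2 * pi 0 ^ 2 * pi 2 * pj 0 * pj 2 * pk 1 * pl 2 - pi 0 ^ 2 * pi 2 * pj 0 ^ 2 * pk 1 * pl 0 + pi 0 ^ 2 * pi 2 * pj 0 ^ 2 * pk 0 * pl 1 - 2 * pi 0 ^ 2 * pi 1 * pj 0 * pj 1 * pk 2 * pl 1 + 2 * pi 0 ^ 2 * pi 1 * pj 0 * pj 1 * pk 1 * pl 2 + pi 0 ^ 2 * pi 1 * pj 0 ^ 2 * pk 2 * pl 0 - pi 0 ^ 2 * pi 1 * pj 0 ^ 2 * pk 0 * pl 2 - pi 0 ^ 3 * pj 0 ^ 2 * pk 2 * pl 1 + pi 0 ^ 3 * pj 0 ^ 2 * pk 1 * pl 2) * hnj +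
      (-pi 2 * pj 1 * pl 0 + pi 2 * pj 0 * pl 1 + pi 2 ^ 3 * pj 1 * pj 2 ^ 2 * pl 0 - pi 2 ^ 3 * pj 0 * pj 2 ^ 2 * pl 1 + pi 1 * pj 2 * pl 0 - pi 1 * pj 0 * pl 2 - pi 1 * pi 2 ^ 2 * pj 2 ^ 3 * pl 0 + 2 * pi 1 * pi 2 ^ 2 * pj 1 ^ 2 * pj 2 * pl 0 + pi 1 * pi 2 ^ 2 * pj 0 * pj 2 ^ 2 * pl 2 - 2 * pi 1 * pi 2 ^ 2 * pj 0 * pj 1 * pj 2 * pl 1 - 2 * pi 1 ^ 2 * pi 2 * pj 1 * pj 2 ^ 2 * pl 0 + pi 1 ^ 2 * pi 2 * pj 1 ^ 3 * pl 0 + 2 * pi 1 ^ 2 * pi 2 * pj 0 * pj 1 * pj 2 * pl 2 - pi 1 ^ 2 * pi 2 * pj 0 * pj 1 ^ 2 * pl 1 - pi 1 ^ 3 * pj 1 ^ 2 * pj 2 * pl 0 + pi 1 ^ 3 * pj 0 * pj 1 ^ 2 * pl 2 - pi 0 * pj 2 * pl 1 + pi 0 * pj 1 * pl 2 + pi 0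 * pi 2 ^ 2 * pj 2 ^ 3 * pl 1 - pi 0 * pi 2 ^ 2 * pj 1 * pj 2 ^ 2 * pl 2 + 2 * pi 0 * pi 2 ^ 2 * pj 0 * pj 1 * pj 2 * pl 0 - 2 * pi 0 * pi 2 ^ 2 * pj 0 ^ 2 * pj 2 * pl 1 + 2 * pi 0 * pi 1 * pi 2 * pj 1 * pj 2 ^ 2 * pl 1 - 2 * pi 0 * pi 1 * pi 2 * pj 1 ^ 2 * pj 2 * pl 2 - 2 * pi 0 * pi 1 * pi 2 * pj 0 * pj 2 ^ 2 * pl 0 + 2 * pi 0 * pi 1 * pi 2 * pj 0 * pj 1 ^ 2 * pl 0 + 2 * pi 0 * pi 1 * pi 2 * pj 0 ^ 2 * pj 2 * pl 2 - 2 * pi 0 * pi 1 * pi 2 * pj 0 ^ 2 * pj 1 * pl 1 + pi 0 * pi 1 ^ 2 * pj 1 ^ 2 * pj 2 * pl 1 - pi 0 * pi 1 ^ 2 * pj 1 ^ 3 * pl 2 - 2 * pi 0 * pi 1 ^ 2 * pj 0 * pj 1 * pj 2 * pl 0 + 2 * pi 0 * pi 1 ^ 2 * pj 0 ^ 2 *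 pj 1 * pl 2 + 2 * pi 0 ^ 2 * pi 2 * pj 0 * pj 2 ^ 2 * pl 1 - 2 * pi 0 ^ 2 * pi 2 * pj 0 * pj 1 * pj 2 * pl 2 + pi 0 ^ 2 * pi 2 * pj 0 ^ 2 * pj 1 * pl 0 - pi 0 ^ 2 * pi 2 * pj 0 ^ 3 * pl 1 + 2 * pi 0 ^ 2 * pi 1 * pj 0 * pj 1 * pj 2 * pl 1 - 2 * pi 0 ^ 2 * pi 1 * pj 0 * pj 1 ^ 2 * pl 2 - pi 0 ^ 2 * pi 1 * pj 0 ^ 2 * pj 2 * pl 0 + pi 0 ^ 2 * pi 1 * pj 0 ^ 3 * pl 2 + pi 0 ^ 3 * pj 0 ^ 2 * pj 2 * pl 1 - pi 0 ^ 3 * pj 0 ^ 2 * pj 1 * pl 2) * hnk +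
      (pj 2 * pk 1 * pl 0 - pj 2 * pk 0 * pl 1 - pj 1 * pk 2 * pl 0 + pj 1 * pk 0 * pl 2 + pj 0 * pk 2 * pl 1 - pj 0 * pj 2 ^ 2 * pk 1 * pl 2 - pj 0 * pj 1 ^ 2 * pk 1 * pl 2 - pj 0 ^ 3 * pk 1 * pl 2 - pi 2 * pj 2 ^ 2 * pk 1 * pl 0 + pi 2 * pj 2 ^ 2 * pk 0 * pl 1 + pi 2 * pj 1 * pj 2 * pk 2 * pl 0 - pi 2 * pj 1 * pj 2 * pk 0 * pl 2 - pi 2 * pj 0 * pj 2 * pk 2 * pl 1 + pi 2 * pj 0 * pj 2 * pk 1 * pl 2 - pi 1 * pj 1 * pj 2 * pk 1 * pl 0 + pi 1 * pj 1 * pj 2 * pk 0 * pl 1 + pi 1 * pj 1 ^ 2 * pk 2 * pl 0 - pi 1 * pj 1 ^ 2 * pk 0 * pl 2 - pi 1 * pj 0 * pj 1 * pk 2 * pl 1 + pi 1 * pj 0 * pj 1 * pk 1 * pl 2 - pi 0 * pk 2 * pl 1 + pi 0 * pj 2 ^ 2 * pk 2 * pl 1 + pi 0 * pj 1 ^ 2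 * pk 2 * pl 1 - pi 0 * pj 0 * pj 2 * pk 1 * pl 0 + pi 0 * pj 0 * pj 2 * pk 0 * pl 1 + pi 0 * pj 0 * pj 1 * pk 2 * pl 0 - pi 0 * pj 0 * pj 1 * pk 0 * pl 2 + pi 0 * pj 0 ^ 2 * pk 1 * pl 2) * h1 +
      (-pj 0 * pk 1 * pl 2 - pi 2 * pk 1 * pl 0 + pi 2 * pk 0 * pl 1 + pi 2 ^ 2 * pj 2 * pk 1 * pl 0 - pi 2 ^ 2 * pj 2 * pk 0 * pl 1 + pi 2 ^ 2 * pj 0 * pk 1 * pl 2 + pi 1 * pk 2 * pl 0 - pi 1 * pk 0 * pl 2 - pi 1 * pi 2 * pj 2 * pk 2 * pl 0 + pi 1 * pi 2 * pj 2 * pk 0 * pl 2 + pi 1 * pi 2 * pj 1 * pk 1 * pl 0 - pi 1 * pi 2 * pj 1 * pk 0 * pl 1 - pi 1 ^ 2 * pj 1 * pk 2 * pl 0 + pi 1 ^ 2 * pj 1 * pk 0 * pl 2 + pi 1 ^ 2 * pj 0 * pk 1 * pl 2 + pi 0 * pk 1 * pl 2 + pi 0 * pi 2 * pj 2 * pk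 2 * pl 1 - pi 0 * pi 2 * pj 2 * pk 1 * pl 2 + pi 0 * pi 2 * pj 0 * pk 1 * pl 0 - pi 0 * pi 2 * pj 0 * pk 0 * pl 1 - pi 0 * pi 2 ^ 2 * pk 2 * pl 1 + pi 0 * pi 1 * pj 1 * pk 2 * pl 1 - pi 0 * pi 1 * pj 1 * pk 1 * pl 2 - pi 0 * pi 1 * pj 0 * pk 2 * pl 0 + pi 0 * pi 1 * pj 0 * pk 0 * pl 2 - pi 0 * pi 1 ^ 2 * pk 2 * pl 1 + pi 0 ^ 2 * pj 0 * pk 2 * pl 1 - pi 0 ^ 3 * pk 2 * pl 1) * h2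
  have hkey2 : (1 + dot3 pi pj - dot3 pj pk - dot3 pi pk) * (-det3 pi pj pl)
      + (1 + dot3 pi pj - dot3 pi pl - dot3 pj pl) * det3 pi pj pk
      = (1 - dot3 n pl) * (1 + dot3 pi pj) * det3 pi pj pk := by
    apply mul_right_cancel₀ hc1m.ne'
    linear_combination hkey
  have hW : sphEdgeWeight pi pj pk pl = (1 - dot3 n pl) / (-det3 pi pj pl) := by
    rw [sphEdgeWeight, ht1, ht2, hden]
    rw [div_add_div _ _ hdetk.ne' hepos.ne']
    rw [show (1 + dot3 pi pj - dot3 pj pk - dot3 pi pk) * (-det3 pi pj pl)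
        + det3 pi pj pk * (1 + dot3 pi pj - dot3 pi pl - dot3 pj pl)
      = (1 - dot3 n pl) * (1 + dot3 pi pj) * det3 pi pj pk by linear_combination hkey2]
    rw [div_div]
    rw [div_eq_div_iff (by positivity) hepos.ne']
    ring
  rw [hW]
  constructor
  · rw [le_div_iff₀ hepos, zero_mul, sub_nonneg]
  · rw [div_eq_zero_iff]
    constructor
    · rintro (h | h)
      · linarith [sub_eq_zero.mp h]
      · exact absurd h hepos.ne'
    · intro h; left; rw [h]; ring
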